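/- arXiv:1607.06681 — 3 statements merged into one kernel-verified Lean document; each statement's English description precedes it below -/
import Mathlib

section
/- If a and b are digits with 1 ≤ a, b ≤ 9, and m ≥ 6 and n ≥ 6, then a·(10^m−1)/9 + b·(10^n−1)/9 is not a perfect square. -/
lemma rep_mod (m : ℕ) (hm : 6 ≤ m) :
    (10 ^ m - 1) / 9 % 64 = 7 ∧ (10 ^ m - 1) / 9 % 25 = 11 := by
  obtain ⟨t, rfl⟩ := Nat.exists_eq_add_of_le hm
  have h9 : (9 : ℕ) ∣ 10 ^ t - 1 := by
    simpa using Nat.sub_dvd_pow_sub_pow 10 1 t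
  obtain ⟨r, hr⟩ := h9
  have hpos : 1 ≤ (10 : ℕ) ^ t := Nat.one_le_pow _ _ (by norm_num)
  have h10 : (10 : ℕ) ^ t = 9 * r + 1 := by omega
  have key : (10 ^ (6 + t) - 1) / 9 = 111111 + 10 ^ 6 * r := by
    have h1 : (10 : ℕ) ^ (6 + t) - 1 = 9 * (111111 + 10 ^ 6 * r) := by
      rw [pow_add, h10]
      norm_num; omega
    rw [h1, Nat.mul_div_cancel_left _ (by norm_num)]
  rw [key]
  omega

theorem stmt6 (a b m n : ℕ) (ha : 1 ≤ a) (ha' : a ≤ 9) (hb : 1 ≤ b) (hb' : b ≤ 9)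
    (hm : 6 ≤ m) (hn : 6 ≤ n) :
    ¬ ∃ k : ℕ, a * ((10 ^ m - 1) / 9) + b * ((10 ^ n - 1) / 9) = k ^ 2 := by
  rintro ⟨k, hk⟩
  have HA := rep_mod m hm
  have HB := rep_mod n hn
  set X := (10 ^ m - 1) / 9 with hX
  set Y := (10 ^ n - 1) / 9 with hY
  obtain ⟨q1, hq1⟩ : ∃ q, X = 64 * q + 7 :=
    ⟨X / 64, by have := Nat.div_add_mod X 64; omega⟩
  obtain ⟨q2, hq2⟩ : ∃ q, Y = 64 * q + 7 :=
    ⟨Y / 64, by have := Nat.div_add_mod Y 64; omega⟩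
  obtain ⟨r1, hr1⟩ : ∃ q, X = 25 * q + 11 :=
    ⟨X / 25, by have := Nat.div_add_mod X 25; omega⟩
  obtain ⟨r2, hr2⟩ : ∃ q, Y = 25 * q + 11 :=
    ⟨Y / 25, by have := Nat.div_add_mod Y 25; omega⟩
  have h64 : k ^ 2 % 64 = 7 * (a + b) % 64 := by
    have e : a * X + b * Y = 64 * (a * q1 + b * q2) + 7 * (a + b) := by
      rw [hq1, hq2]; ring
    rw [← hk, e, Nat.mul_add_mod]
  have h25 : k ^ 2 % 25 = 11 * (a + b) % 25 := by
    have e : a * X + b * Y = 25 * (a * r1 + b * r2) + 11 * (a + b) := by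
      rw [hr1, hr2]; ring
    rw [← hk, e, Nat.mul_add_mod]
  have hx : (k % 64) ^ 2 % 64 = 7 * (a + b) % 64 := by
    rw [← Nat.pow_mod]; exact h64
  have hy : (k % 25) ^ 2 % 25 = 11 * (a + b) % 25 := by
    rw [← Nat.pow_mod]; exact h25
  have key : ∀ c < 19, 2 ≤ c → ∀ x < 64, ∀ y < 25,
      ¬(x ^ 2 % 64 = 7 * c % 64 ∧ y ^ 2 % 25 = 11 * c % 25) := by decide
  exact key (a + b) (by omega) (by omega) (k % 64) (Nat.mod_lt _ (by norm_num))
    (k % 25) (Nat.mod_lt _ (by norm_num)) ⟨hx, hy⟩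
end

section
/- There is no integer m ≥ 6 such that 8·(10^m−1)/9 + 33 is a perfect square. -/
/-!
Multiplying by 9 turns the equation into `(3k)² = 8·10^m + 289 = 8·10^m + 17²`; writing the odd
number `3k` as `2a + 17` gives `a(a + 17) = 2^(m+1)·5^m`. The two factors are coprime (their gcd
divides 17), so `5^m` divides one of them and the other is at most `2^(m+1)`. Since they differ
by only 17, this forces `5^m ≤ 2^(m+1) + 17`, which fails for `m ≥ 3`.
-/

lemma nine_mul_repdigit_eight_add_thirtythree (m : ℕ) :
    9 * (8 * ((10 ^ m - 1) / 9) + 33) = 8 * 10 ^ m + 289 := by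
  have hdvd : 9 ∣ 10 ^ m - 1 := by simpa only [one_pow] using Nat.sub_dvd_pow_sub_pow 10 1 m
  have hpos : 1 ≤ 10 ^ m := Nat.one_le_pow _ _ (by norm_num)
  omega

lemma exists_mul_add_seventeen_eq_of_sq_eq {x n : ℕ} (h : x ^ 2 = 8 * n + 289) :
    ∃ a, a * (a + 17) = 2 * n := by
  have hodd : Odd x := (Nat.odd_pow_iff two_ne_zero).mp ⟨4 * n + 144, by omega⟩
  have hge : 17 ≤ x := by
    by_contra! hlt
    have : x ^ 2 < 17 ^ 2 := Nat.pow_lt_pow_left hlt two_ne_zero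
    omega
  obtain ⟨b, rfl⟩ := hodd
  refine ⟨b - 8, ?_⟩
  obtain ⟨a, rfl⟩ : ∃ a, b = a + 8 := ⟨b - 8, by omega⟩
  rw [Nat.add_sub_cancel]
  nlinarith

lemma two_pow_succ_add_seventeen_lt_five_pow {m : ℕ} (hm : 3 ≤ m) :
    2 ^ (m + 1) + 17 < 5 ^ m := by
  induction m, hm using Nat.le_induction with
  | base => norm_num
  | succ m _ ih => rw [pow_succ, pow_succ 5]; omega

lemma add_lt_of_mul_eq_of_dvd {u v b c d : ℕ} (hmul : u * v = b * c) (hb : 0 < b)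
    (hc : c ∣ u) (hbc : b + d < c) : v + d < u := by
  obtain ⟨w, rfl⟩ := hc
  have hcw : w * v = b := by
    have hc0 : 0 < c := by omega
    rw [mul_assoc, mul_comm b] at hmul
    exact Nat.eq_of_mul_eq_mul_left hc0 hmul
  have hw : 1 ≤ w := Nat.pos_of_ne_zero (by rintro rfl; omega)
  have hvb : v ≤ b := hcw ▸ Nat.le_mul_of_pos_left v hw
  have hcu : c ≤ c * w := Nat.le_mul_of_pos_right c hw
  omega

theorem stmt14 : ¬ ∃ m : ℕ, 6 ≤ m ∧ ∃ k : ℕ, 8 * ((10 ^ m - 1) / 9) + 33 = k ^ 2 := by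
  rintro ⟨m, hm, k, hk⟩
  have hsq : (3 * k) ^ 2 = 8 * 10 ^ m + 289 := by
    rw [← nine_mul_repdigit_eight_add_thirtythree, hk]; ring
  obtain ⟨a, ha⟩ := exists_mul_add_seventeen_eq_of_sq_eq hsq
  have hfac : a * (a + 17) = 2 ^ (m + 1) * 5 ^ m := by rw [ha, pow_succ, show (10 : ℕ) = 2 * 5 from rfl, mul_pow]; ring
  have h17 : Nat.Coprime (a * (a + 17)) 17 := by
    rw [hfac]; exact Nat.Coprime.mul_left (.pow_left _ (by norm_num)) (.pow_left _ (by norm_num))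
  have hcop : Nat.Coprime a (a + 17) := Nat.coprime_self_add_right.mpr h17.coprime_mul_right
  have hbound := two_pow_succ_add_seventeen_lt_five_pow (by omega : 3 ≤ m)
  have h5 : 5 ^ m ∣ a * (a + 17) := hfac ▸ dvd_mul_left _ _
  rcases (hcop.isPrimePow_dvd_mul (Nat.prime_five.isPrimePow.pow (by omega))).mp h5 with h | h
  · have := add_lt_of_mul_eq_of_dvd hfac (by positivity) h hbound
    omega
  · have := add_lt_of_mul_eq_of_dvd ((mul_comm _ _).trans hfac) (by positivity) h hbound
    omega
end

section
/- There is no integer m ≥ 2 such that 7·(10^m−1)/9 + 99999 is a perfect square. -/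
set_option maxRecDepth 100000

lemma key16 (M : ℕ) (hM : 0 < M) (m r : ℕ) (hr : m % 96 = r)
    (h96 : 10 ^ 96 % M = 1 % M)
    (hsq : ∀ x < M, x ^ 2 % M ≠ (7 * 10 ^ r + 899984) % M)
    (t : ℕ) (ht : t ^ 2 = 7 * 10 ^ m + 899984) : False := by
  apply hsq (t % M) (Nat.mod_lt _ hM)
  have h1 : 10 ^ 96 ≡ 1 [MOD M] := h96
  have h3 : (10 : ℕ) ^ m ≡ 10 ^ r [MOD M] := by
    have hm : m = 96 * (m / 96) + r := by omega
    calc (10:ℕ) ^ m = (10 ^ 96) ^ (m / 96) * 10 ^ r := by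
          rw [← pow_mul, ← pow_add, ← hm]
      _ ≡ 1 ^ (m / 96) * 10 ^ r [MOD M] := (h1.pow _).mul_right _
      _ = 10 ^ r := by rw [one_pow, one_mul]
  have h4 : 7 * 10 ^ m + 899984 ≡ 7 * 10 ^ r + 899984 [MOD M] :=
    (h3.mul_left 7).add_right _
  calc (t % M) ^ 2 % M = t ^ 2 % M := (Nat.pow_mod t 2 M).symm
    _ = (7 * 10 ^ r + 899984) % M := by rw [ht]; exact h4

theorem stmt16 : ¬ ∃ m : ℕ, 2 ≤ m ∧ ∃ k : ℕ, 7 * ((10 ^ m - 1) / 9) + 99999 = k ^ 2 := by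
  rintro ⟨m, -, k, hk⟩
  have hdvd : 9 ∣ 10 ^ m - 1 := by
    simpa using Nat.sub_dvd_pow_sub_pow 10 1 m
  have hdiv : (10 ^ m - 1) / 9 * 9 = 10 ^ m - 1 := Nat.div_mul_cancel hdvd
  have hX : 1 ≤ 10 ^ m := Nat.one_le_pow _ _ (by norm_num)
  have ht : (3 * k) ^ 2 = 7 * 10 ^ m + 899984 := by
    have h3 : (3 * k) ^ 2 = 9 * k ^ 2 := by ring
    have h4 : k ^ 2 = 7 * ((10 ^ m - 1) / 9) + 99999 := hk.symm
    omega
  obtain ⟨r, hr, hlt⟩ : ∃ r, m % 96 = r ∧ r < 96 :=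
    ⟨_, rfl, Nat.mod_lt _ (by norm_num)⟩
  interval_cases r
  · exact key16 17 (by norm_num) m 0 hr (by norm_num) (by decide) (3 * k) ht
  · exact key16 17 (by norm_num) m 1 hr (by norm_num) (by decide) (3 * k) ht
  · exact key16 13 (by norm_num) m 2 hr (by norm_num) (by decide) (3 * k) ht
  · exact key16 97 (by norm_num) m 3 hr (by norm_num) (by decide) (3 * k) ht
  · exact key16 13 (by norm_num) m 4 hr (by norm_num) (by decide) (3 * k) ht
  · exact key16 17 (by norm_num) m 5 hr (by norm_num) (by decide) (3 * k) ht
  · exact key16 97 (by norm_num) m 6 hr (by norm_num) (by decide) (3 * k) ht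
  · exact key16 17 (by norm_num) m 7 hr (by norm_num) (by decide) (3 * k) ht
  · exact key16 13 (by norm_num) m 8 hr (by norm_num) (by decide) (3 * k) ht
  · exact key16 641 (by norm_num) m 9 hr (by norm_num) (by decide) (3 * k) ht
  · exact key16 13 (by norm_num) m 10 hr (by norm_num) (by decide) (3 * k) ht
  · exact key16 27 (by norm_num) m 11 hr (by norm_num) (by decide) (3 * k) ht
  · exact key16 17 (by norm_num) m 12 hr (by norm_num) (by decide) (3 * k) ht
  · exact key16 37 (by norm_num) m 13 hr (by norm_num) (by decide) (3 * k) ht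
  · exact key16 13 (by norm_num) m 14 hr (by norm_num) (by decide) (3 * k) ht
  · exact key16 17 (by norm_num) m 15 hr (by norm_num) (by decide) (3 * k) ht
  · exact key16 13 (by norm_num) m 16 hr (by norm_num) (by decide) (3 * k) ht
  · exact key16 17 (by norm_num) m 17 hr (by norm_num) (by decide) (3 * k) ht
  · exact key16 17 (by norm_num) m 18 hr (by norm_num) (by decide) (3 * k) ht
  · exact key16 37 (by norm_num) m 19 hr (by norm_num) (by decide) (3 * k) ht
  · exact key16 13 (by norm_num) m 20 hr (by norm_num) (by decide) (3 * k) ht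
  · exact key16 17 (by norm_num) m 21 hr (by norm_num) (by decide) (3 * k) ht
  · exact key16 13 (by norm_num) m 22 hr (by norm_num) (by decide) (3 * k) ht
  · exact key16 17 (by norm_num) m 23 hr (by norm_num) (by decide) (3 * k) ht
  · exact key16 17 (by norm_num) m 24 hr (by norm_num) (by decide) (3 * k) ht
  · exact key16 37 (by norm_num) m 25 hr (by norm_num) (by decide) (3 * k) ht
  · exact key16 13 (by norm_num) m 26 hr (by norm_num) (by decide) (3 * k) ht
  · exact key16 353 (by norm_num) m 27 hr (by norm_num) (by decide) (3 * k) ht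
  · exact key16 13 (by norm_num) m 28 hr (by norm_num) (by decide) (3 * k) ht
  · exact key16 27 (by norm_num) m 29 hr (by norm_num) (by decide) (3 * k) ht
  · exact key16 101 (by norm_num) m 30 hr (by norm_num) (by decide) (3 * k) ht
  · exact key16 17 (by norm_num) m 31 hr (by norm_num) (by decide) (3 * k) ht
  · exact key16 13 (by norm_num) m 32 hr (by norm_num) (by decide) (3 * k) ht
  · exact key16 17 (by norm_num) m 33 hr (by norm_num) (by decide) (3 * k) ht
  · exact key16 13 (by norm_num) m 34 hr (by norm_num) (by decide) (3 * k) ht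
  · exact key16 27 (by norm_num) m 35 hr (by norm_num) (by decide) (3 * k) ht
  · exact key16 73 (by norm_num) m 36 hr (by norm_num) (by decide) (3 * k) ht
  · exact key16 17 (by norm_num) m 37 hr (by norm_num) (by decide) (3 * k) ht
  · exact key16 13 (by norm_num) m 38 hr (by norm_num) (by decide) (3 * k) ht
  · exact key16 17 (by norm_num) m 39 hr (by norm_num) (by decide) (3 * k) ht
  · exact key16 13 (by norm_num) m 40 hr (by norm_num) (by decide) (3 * k) ht
  · exact key16 27 (by norm_num) m 41 hr (by norm_num) (by decide) (3 * k) ht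
  · exact key16 73 (by norm_num) m 42 hr (by norm_num) (by decide) (3 * k) ht
  · exact key16 37 (by norm_num) m 43 hr (by norm_num) (by decide) (3 * k) ht
  · exact key16 13 (by norm_num) m 44 hr (by norm_num) (by decide) (3 * k) ht
  · exact key16 73 (by norm_num) m 45 hr (by norm_num) (by decide) (3 * k) ht
  · exact key16 13 (by norm_num) m 46 hr (by norm_num) (by decide) (3 * k) ht
  · exact key16 17 (by norm_num) m 47 hr (by norm_num) (by decide) (3 * k) ht
  · exact key16 17 (by norm_num) m 48 hr (by norm_num) (by decide) (3 * k) ht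
  · exact key16 17 (by norm_num) m 49 hr (by norm_num) (by decide) (3 * k) ht
  · exact key16 13 (by norm_num) m 50 hr (by norm_num) (by decide) (3 * k) ht
  · exact key16 353 (by norm_num) m 51 hr (by norm_num) (by decide) (3 * k) ht
  · exact key16 13 (by norm_num) m 52 hr (by norm_num) (by decide) (3 * k) ht
  · exact key16 17 (by norm_num) m 53 hr (by norm_num) (by decide) (3 * k) ht
  · exact key16 97 (by norm_num) m 54 hr (by norm_num) (by decide) (3 * k) ht
  · exact key16 17 (by norm_num) m 55 hr (by norm_num) (by decide) (3 * k) ht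
  · exact key16 13 (by norm_num) m 56 hr (by norm_num) (by decide) (3 * k) ht
  · exact key16 97 (by norm_num) m 57 hr (by norm_num) (by decide) (3 * k) ht
  · exact key16 13 (by norm_num) m 58 hr (by norm_num) (by decide) (3 * k) ht
  · exact key16 27 (by norm_num) m 59 hr (by norm_num) (by decide) (3 * k) ht
  · exact key16 17 (by norm_num) m 60 hr (by norm_num) (by decide) (3 * k) ht
  · exact key16 37 (by norm_num) m 61 hr (by norm_num) (by decide) (3 * k) ht
  · exact key16 13 (by norm_num) m 62 hr (by norm_num) (by decide) (3 * k) ht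
  · exact key16 17 (by norm_num) m 63 hr (by norm_num) (by decide) (3 * k) ht
  · exact key16 13 (by norm_num) m 64 hr (by norm_num) (by decide) (3 * k) ht
  · exact key16 17 (by norm_num) m 65 hr (by norm_num) (by decide) (3 * k) ht
  · exact key16 17 (by norm_num) m 66 hr (by norm_num) (by decide) (3 * k) ht
  · exact key16 37 (by norm_num) m 67 hr (by norm_num) (by decide) (3 * k) ht
  · exact key16 13 (by norm_num) m 68 hr (by norm_num) (by decide) (3 * k) ht
  · exact key16 17 (by norm_num) m 69 hr (by norm_num) (by decide) (3 * k) ht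
  · exact key16 13 (by norm_num) m 70 hr (by norm_num) (by decide) (3 * k) ht
  · exact key16 17 (by norm_num) m 71 hr (by norm_num) (by decide) (3 * k) ht
  · exact key16 17 (by norm_num) m 72 hr (by norm_num) (by decide) (3 * k) ht
  · exact key16 37 (by norm_num) m 73 hr (by norm_num) (by decide) (3 * k) ht
  · exact key16 13 (by norm_num) m 74 hr (by norm_num) (by decide) (3 * k) ht
  · exact key16 353 (by norm_num) m 75 hr (by norm_num) (by decide) (3 * k) ht
  · exact key16 13 (by norm_num) m 76 hr (by norm_num) (by decide) (3 * k) ht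
  · exact key16 27 (by norm_num) m 77 hr (by norm_num) (by decide) (3 * k) ht
  · exact key16 97 (by norm_num) m 78 hr (by norm_num) (by decide) (3 * k) ht
  · exact key16 17 (by norm_num) m 79 hr (by norm_num) (by decide) (3 * k) ht
  · exact key16 13 (by norm_num) m 80 hr (by norm_num) (by decide) (3 * k) ht
  · exact key16 17 (by norm_num) m 81 hr (by norm_num) (by decide) (3 * k) ht
  · exact key16 13 (by norm_num) m 82 hr (by norm_num) (by decide) (3 * k) ht
  · exact key16 27 (by norm_num) m 83 hr (by norm_num) (by decide) (3 * k) ht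
  · exact key16 73 (by norm_num) m 84 hr (by norm_num) (by decide) (3 * k) ht
  · exact key16 17 (by norm_num) m 85 hr (by norm_num) (by decide) (3 * k) ht
  · exact key16 13 (by norm_num) m 86 hr (by norm_num) (by decide) (3 * k) ht
  · exact key16 17 (by norm_num) m 87 hr (by norm_num) (by decide) (3 * k) ht
  · exact key16 13 (by norm_num) m 88 hr (by norm_num) (by decide) (3 * k) ht
  · exact key16 27 (by norm_num) m 89 hr (by norm_num) (by decide) (3 * k) ht
  · exact key16 73 (by norm_num) m 90 hr (by norm_num) (by decide) (3 * k) ht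
  · exact key16 37 (by norm_num) m 91 hr (by norm_num) (by decide) (3 * k) ht
  · exact key16 13 (by norm_num) m 92 hr (by norm_num) (by decide) (3 * k) ht
  · exact key16 73 (by norm_num) m 93 hr (by norm_num) (by decide) (3 * k) ht
  · exact key16 13 (by norm_num) m 94 hr (by norm_num) (by decide) (3 * k) ht
  · exact key16 17 (by norm_num) m 95 hr (by norm_num) (by decide) (3 * k) ht
end
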